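/- arXiv:1208.3798 — 2 statements merged into one kernel-verified Lean document; each statement's English description precedes it below -/
import Mathlib

section
/- In a weight-balanced B-tree with branching parameter a > 4 and leaf parameter k > 0 (leaves all at equal depth with weight between k and 2k−1; every internal node at height h has weight at most 2a^h·k; every internal node except the root has weight at least (1/2)a^h·k), every internal node other than the root has between a/4 and 4a children. -/
namespace List

variable {α : Type*} [Field α] [LinearOrder α] [IsStrictOrderedRing α] {l : List α}

theorem div_le_length_of_le_sum {lower upper : α} (hupper : 0 < upper)
    (hle : ∀ x ∈ l, x ≤ upper) (hsum : lower ≤ l.sum) : lower / upper ≤ l.length := by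
  rw [div_le_iff₀ hupper]
  simpa using hsum.trans (l.sum_le_card_nsmul upper hle)

theorem length_le_div_of_sum_le {lower upper : α} (hlower : 0 < lower)
    (hle : ∀ x ∈ l, lower ≤ x) (hsum : l.sum ≤ upper) : l.length ≤ upper / lower := by
  rw [le_div_iff₀ hlower]
  simpa using (l.card_nsmul_le_sum lower hle).trans hsum

end List

/-- A non-root internal node at height `h ≥ 1` is modeled by the list `ws` of its children's
weights; the children's lower bound `(1/2)·a^(h-1)·k` also holds for leaves, whose weight is
at least `k`. -/
theorem wbbt_children_bound
    (a k : ℝ) (ha : 4 < a) (hk : 0 < k)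
    (h : ℕ) (hh : 1 ≤ h)
    (ws : List ℝ)
    (hlo : ∀ w ∈ ws, (1/2) * a^(h-1) * k ≤ w)
    (hhi : ∀ w ∈ ws, w ≤ 2 * a^(h-1) * k)
    (hWlo : (1/2) * a^h * k ≤ ws.sum)
    (hWhi : ws.sum ≤ 2 * a^h * k) :
    a / 4 ≤ (ws.length : ℝ) ∧ (ws.length : ℝ) ≤ 4 * a := by
  obtain ⟨m, rfl⟩ : ∃ m, h = m + 1 := ⟨h - 1, by omega⟩
  rw [Nat.add_sub_cancel] at hlo hhi
  constructor
  · calc a / 4 = (1/2) * a ^ (m + 1) * k / (2 * a ^ m * k) := by field_simp; ring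
      _ ≤ ws.length := List.div_le_length_of_le_sum (by positivity) hhi hWlo
  · calc (ws.length : ℝ) ≤ 2 * a ^ (m + 1) * k / ((1/2) * a ^ m * k) :=
          List.length_le_div_of_sum_le (by positivity) hlo hWhi
      _ = 4 * a := by field_simp; ring
end

section
/- In a tag scheme where every element's tag at a given tree level uses b+1 bits with the most significant bit (MSB) serving as a version flag, suppose all old labels have MSB 0 and all new labels have MSB 1, the new labels (without MSB) are order-consistent among themselves, the old labels (without MSB) are order-consistent among themselves, and the elements are relabeled from the rightmost (largest) element towards the leftmost. Then at every intermediate point of the relabeling process, for any two elements x preceding y in the list, the (b+1)-bit fields of x and y satisfy field(x) < field(y) or x and y lie under the same child (are tied), i.e., comparisons via the current tags never contradict the list order. -/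
theorem Monotone.ite_of_le {α β : Type*} [Preorder α] [Preorder β] {P : α → Prop}
    [DecidablePred P] {f g : α → β} (hP : Monotone P) (hf : Monotone f) (hg : Monotone g)
    (hfg : ∀ ⦃i j⦄, i ≤ j → f i ≤ g j) :
    Monotone fun i => if P i then g i else f i := by
  intro i j hij
  by_cases hj : P j
  · by_cases hi : P i
    · simpa only [if_pos hi, if_pos hj] using hg hij
    · simpa only [if_neg hi, if_pos hj] using hfg hij
  · have hi : ¬P i := fun hi => hj (hP hij hi)
    simpa only [if_neg hi, if_neg hj] using hf hij

theorem relabel_msb_consistent_general (n b p : ℕ)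
    (oldf newf : Fin n → ℕ)
    (holdlt : ∀ i, oldf i < 2^b)
    (holdmono : Monotone oldf) (hnewmono : Monotone newf) :
    Monotone (fun i : Fin n => if p ≤ (i : ℕ) then 2^b + newf i else oldf i) ∧
    ∀ i j : Fin n,
      (if p ≤ (i : ℕ) then 2^b + newf i else oldf i) <
        (if p ≤ (j : ℕ) then 2^b + newf j else oldf j) → i < j := by
  have hfield : Monotone fun i : Fin n => if p ≤ (i : ℕ) then 2^b + newf i else oldf i :=
    Monotone.ite_of_le (fun _ _ hij hi => le_trans hi hij) holdmono
      (monotone_const.add hnewmono) fun i j _ => (holdlt i).le.trans (Nat.le_add_right _ _)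
  exact ⟨hfield, fun _ _ => hfield.reflect_lt⟩

/-- MSB versioning during relabeling.  A segment of `n` list elements is
being relabeled.  Old labels (`oldf`, MSB `0`, so value `oldf i < 2^b`) are
order-consistent (nondecreasing along the list), and so are the new labels (`newf`,
MSB `1`, so field value `2^b + newf i`).  Relabeling proceeds from the rightmost element
leftwards, so at an intermediate moment the suffix of positions `≥ p` carries new labels
and the prefix carries old labels.  Then the current `(b+1)`-bit fields never contradict
the list order: for `x` preceding `y`, `field x < field y` or `field x = field y`
(a tie, when they lie under the same child), i.e. the field function is monotone, and a
strict field comparison implies the correct list order. -/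
theorem relabel_msb_consistent (n b p : ℕ)
    (oldf newf : Fin n → ℕ)
    (holdlt : ∀ i, oldf i < 2^b) (hnewlt : ∀ i, newf i < 2^b)
    (holdmono : Monotone oldf) (hnewmono : Monotone newf) :
    Monotone (fun i : Fin n => if p ≤ (i : ℕ) then 2^b + newf i else oldf i) ∧
    ∀ i j : Fin n,
      (if p ≤ (i : ℕ) then 2^b + newf i else oldf i) <
        (if p ≤ (j : ℕ) then 2^b + newf j else oldf j) → i < j :=
  relabel_msb_consistent_general n b p oldf newf holdlt holdmono hnewmono
end
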